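/- For a BTW sandpile cascade that forms a finite tree G†, every non-root node at capacity that topples n ≥ 1 times, with signature (n′, m′) toward its parent (the parent sends n′ grains toward it and receives m′ grains from it), where m is the number of grains it actually receives from its parent, satisfies the chain of inequalities n′ ≥ m ≥ n ≥ m′ ≥ n′ − 1; consequently exactly one of the following four cases holds: (i) n′ = n+1 and m = m′ = n (last grain from parent dissipated); (ii) n′ = m = n+1 and m′ = n (no dissipation on this edge, and not all children may have signature (n, n)); (iii) n′ = m = n and m′ = n−1 (last grain toward parent dissipated); (iv) n′ = m = m′ = n (no dissipation). -/

import Mathlib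

namespace BTW

/-- All data specifying one realization of a BTW sandpile cascade on a finite graph:
the graph `G`, which nodes are sinks, the per-grain dissipation realization `diss`
(`diss u v k = true` means the `k`-th grain sent from `u` to `v` dissipates in transit),
the initial sand configuration `init`, and the `root` on which one extra grain is dropped. -/
structure Cascade (V : Type*) where
  G : SimpleGraph V
  adjDec : DecidableRel G.Adj
  sink : V → Bool
  diss : V → V → ℕ → Bool
  init : V → ℕ
  root : V

attribute [instance] Cascade.adjDec

/-- Running tallies of a cascade: current grains held, cumulative topplings
(= grains sent along each incident edge), and cumulative grains received per ordered edge. -/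
structure Config (V : Type*) where
  held : V → ℕ
  sentC : V → ℕ
  recvC : V → V → ℕ

variable {V : Type*} [Fintype V] [DecidableEq V]

/-- Number of grains, among those with indices in `[a, b)` sent from `u` to `v`,
that are not dissipated. -/
def arrivals (diss : V → V → ℕ → Bool) (u v : V) (a b : ℕ) : ℕ :=
  ((Finset.Ico a b).filter fun k => diss u v k = false).card

/-- A node holding at least `deg` grains immediately topples as many times as possible
(capacity is `deg − 1`); sinks never topple. -/
def Cascade.tops (c : Cascade V) (cf : Config V) (v : V) : ℕ :=
  if c.sink v then 0 else cf.held v / c.G.degree v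

/-- One synchronous step of the cascade: every over-capacity node topples,
sending one grain toward each neighbor per toppling; each grain dissipates or arrives
according to `c.diss`. -/
def Cascade.step (c : Cascade V) (cf : Config V) : Config V where
  held v := (cf.held v - c.G.degree v * c.tops cf v) +
    ∑ u ∈ c.G.neighborFinset v, arrivals c.diss u v (cf.sentC u) (cf.sentC u + c.tops cf u)
  sentC v := cf.sentC v + c.tops cf v
  recvC u v := cf.recvC u v +
    if c.G.Adj u v then arrivals c.diss u v (cf.sentC u) (cf.sentC u + c.tops cf u) else 0

/-- The state of the cascade at (discrete) time `t`; at time `0` one grain is dropped on the root. -/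
def Cascade.state (c : Cascade V) : ℕ → Config V
  | 0 => ⟨fun v => c.init v + if v = c.root then 1 else 0, fun _ => 0, fun _ _ => 0⟩
  | t + 1 => c.step (c.state t)

/-- Number of times `v` has toppled by time `t`. -/
def Cascade.topplesBy (c : Cascade V) (t : ℕ) (v : V) : ℕ := (c.state t).sentC v

/-- Number of grains `v` has received from `u` by time `t`. -/
def Cascade.recvBy (c : Cascade V) (t : ℕ) (u v : V) : ℕ := (c.state t).recvC u v

/-- Number of grains sent from `u` toward `v` by time `t`. -/
def Cascade.sentBy (c : Cascade V) (t : ℕ) (u v : V) : ℕ :=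
  if c.G.Adj u v then c.topplesBy t u else 0

/-- `v` initially holds exactly its capacity `deg v − 1` of grains. -/
def Cascade.AtCap (c : Cascade V) (v : V) : Prop := c.init v + 1 = c.G.degree v

/-- `v` topples at least once during the cascade. -/
def Cascade.Topples (c : Cascade V) (v : V) : Prop := ∃ t, 0 < c.topplesBy t v

/-- The area of the cascade: the number of distinct nodes that topple. -/
noncomputable def Cascade.area (c : Cascade V) : ℕ := Set.ncard {v | c.Topples v}

/-- `v` is a node of the graph `G†`: the root, a toppling node, or a neighbor of a toppling
node (equivalently, a node toward which sand is sent, or the root). -/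
def Cascade.InDagger (c : Cascade V) (v : V) : Prop :=
  v = c.root ∨ ∃ u, c.G.Adj u v ∧ c.Topples u

/-- The graph `G†`: edges of `G` along which sand is sent, i.e. edges with at least one
toppling endpoint (other nodes are isolated in this graph). -/
def Cascade.daggerGraph (c : Cascade V) : SimpleGraph V where
  Adj a b := c.G.Adj a b ∧ (c.Topples a ∨ c.Topples b)
  symm := ⟨fun a b h => ⟨h.1.symm, h.2.symm⟩⟩
  loopless := ⟨fun a h => c.G.loopless.irrefl a h.1⟩

/-- The cascade forms a finite tree `G†`: the graph `G†` is acyclic and all its nodes are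
connected to the root within it. -/
def Cascade.FormsTree (c : Cascade V) : Prop :=
  c.daggerGraph.IsAcyclic ∧ ∀ v, c.InDagger v → c.daggerGraph.Reachable c.root v

/-- `u` is the parent of `v`: `u` is the neighbor of `v` whose toppling first sent a grain
toward `v` (at some time `u` has sent sand toward `v` while no other node has). -/
def Cascade.IsParent (c : Cascade V) (u v : V) : Prop :=
  ∃ t, 0 < c.sentBy t u v ∧ ∀ w, w ≠ u → c.sentBy t w v = 0

/-- `d` is a descendant of `v`: iterating the parent map starting from `d` reaches `v`. -/
def Cascade.IsDescendant (c : Cascade V) (d v : V) : Prop :=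
  Relation.TransGen (fun a b => c.IsParent b a) d v

end BTW

/-!
Root `G†` at the node receiving the dropped grain and prove, by induction on time, that along
every tree edge from a parent `a` to a child `b`, `b` has toppled at most as often as it has
received grains from `a`, and `a` at most once more than it has received from `b`. A node
toppling for the `k`-th time needs `k · deg` grains but started with at most `deg - 1`, while
each of its children has delivered at most as many grains as the node had toppled before. So
the parent of `b` must have delivered at least `k` grains to `b`. For `a`, the neighbors other
than `b`, together with the drop at the root, exceed the children's share by at most one grain
(the parent of `a` is at most one toppling ahead of `a`), so `b` must have delivered at least
`k - 1`. For `v` this gives `n ≤ m` and `n' ≤ m' + 1`; since no edge delivers more grains than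
were sent along it, `n ≤ m ≤ n' ≤ m' + 1 ≤ n + 1`, and the four cases are what remains.
-/

namespace SimpleGraph

variable {V : Type*} {H : SimpleGraph V} {r a b : V}

/-- When `H` is acyclic, `a` is the vertex following `b` on the path from `b` to `r`. -/
def IsTreeParent (H : SimpleGraph V) (r a b : V) : Prop :=
  H.Adj a b ∧ ∃ w : H.Walk r a, b ∉ w.support

namespace IsTreeParent

theorem ne_root (h : H.IsTreeParent r a b) : b ≠ r := by
  rintro rfl
  obtain ⟨-, w, hb⟩ := h
  exact hb w.start_mem_support

variable [DecidableEq V]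

theorem exists_isPath_cons (h : H.IsTreeParent r a b) :
    ∃ q : H.Walk a r, (Walk.cons h.1.symm q).IsPath := by
  obtain ⟨-, w, hb⟩ := h
  refine ⟨w.bypass.reverse, w.bypass_isPath.reverse.cons ?_⟩
  rw [Walk.support_reverse, List.mem_reverse]
  exact fun hmem => hb (w.support_bypass_subset_support hmem)

theorem unique (hH : H.IsAcyclic) {a' : V} (h : H.IsTreeParent r a b)
    (h' : H.IsTreeParent r a' b) : a = a' := by
  obtain ⟨q, hq⟩ := h.exists_isPath_cons
  obtain ⟨q', hq'⟩ := h'.exists_isPath_cons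
  have heq := congrArg Subtype.val
    ((hH.subsingleton_path b r).elim (⟨_, hq⟩ : H.Path b r) ⟨_, hq'⟩)
  simpa using congrArg (Walk.getVert · 1) heq

theorem not_symm (hH : H.IsAcyclic) (h : H.IsTreeParent r a b) : ¬ H.IsTreeParent r b a := by
  intro h'
  obtain ⟨q, hq⟩ := h.exists_isPath_cons
  obtain ⟨q', hq'⟩ := h'.exists_isPath_cons
  have heq := congrArg Subtype.val
    ((hH.subsingleton_path a r).elim (⟨q, hq.of_cons⟩ : H.Path a r) ⟨_, hq'⟩)
  have hb : b ∈ q.support := by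
    simp only at heq
    rw [heq, Walk.support_cons]
    exact List.mem_cons_of_mem _ q'.start_mem_support
  exact ((Walk.cons_isPath_iff _ _).1 hq).2 hb

end IsTreeParent

variable [DecidableEq V]

theorem isTreeParent_or_isTreeParent (hadj : H.Adj a b) (hreach : H.Reachable r a) :
    H.IsTreeParent r a b ∨ H.IsTreeParent r b a := by
  obtain ⟨w⟩ := hreach
  set q := w.bypass
  by_cases hb : b ∈ q.support
  · refine Or.inr ⟨hadj.symm, q.takeUntil b hb, fun hmem => ?_⟩
    have hnodup : q.support.Nodup := w.bypass_isPath.support_nodup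
    rw [← q.take_spec hb, Walk.support_append] at hnodup
    have ha : a ∈ (q.dropUntil b hb).support.tail := by
      have hend := (q.dropUntil b hb).end_mem_support
      rw [← Walk.cons_tail_support] at hend
      exact (List.mem_cons.mp hend).resolve_left hadj.ne
    exact List.disjoint_of_nodup_append hnodup hmem ha
  · exact Or.inl ⟨hadj, q, hb⟩

theorem exists_isTreeParent (hb : b ≠ r) (hreach : H.Reachable r b) :
    ∃ a, H.IsTreeParent r a b := by
  obtain ⟨w⟩ := hreach
  have hq : w.bypass.reverse.IsPath := w.bypass_isPath.reverse
  obtain ⟨a, hadj, q, hq_eq⟩ := Walk.exists_eq_cons_of_ne hb w.bypass.reverse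
  rw [hq_eq, Walk.cons_isPath_iff] at hq
  refine ⟨a, hadj.symm, q.reverse, ?_⟩
  rw [Walk.support_reverse, List.mem_reverse]
  exact hq.2

end SimpleGraph

theorem Nat.le_add_of_mul_le_add_pred_mul {d i j k r e : ℕ} (hi : i < d) (hj : j < k)
    (h : d * k ≤ i + r + ((d - 1) * j + e)) : k ≤ r + e := by
  obtain ⟨d, rfl⟩ : ∃ d', d = d' + 1 := ⟨d - 1, by omega⟩
  simp only [Nat.add_sub_cancel] at h
  nlinarith

namespace BTW

open SimpleGraph

variable {V : Type*}

theorem arrivals_le (diss : V → V → ℕ → Bool) (u v : V) (a b : ℕ) :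
    arrivals diss u v a b ≤ b - a :=
  (Finset.card_filter_le _ _).trans (Nat.card_Ico a b).le

namespace Cascade

variable [Fintype V] (c : Cascade V)

theorem degree_mul_tops_le (cf : Config V) (v : V) : c.G.degree v * c.tops cf v ≤ cf.held v := by
  unfold tops
  split
  · simp
  · rw [mul_comm]
    exact Nat.div_mul_le_self _ _

variable [DecidableEq V]

theorem topplesBy_succ (t : ℕ) (v : V) :
    c.topplesBy (t + 1) v = c.topplesBy t v + c.tops (c.state t) v := rfl

theorem recvBy_succ (t : ℕ) (u v : V) :
    c.recvBy (t + 1) u v = c.recvBy t u v + if c.G.Adj u v then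
      arrivals c.diss u v (c.topplesBy t u) (c.topplesBy t u + c.tops (c.state t) u) else 0 := rfl

theorem topplesBy_zero (v : V) : c.topplesBy 0 v = 0 := rfl

theorem topplesBy_mono (v : V) : Monotone (c.topplesBy · v) :=
  monotone_nat_of_le_succ fun t => by simp [topplesBy_succ]

theorem recvBy_mono (u v : V) : Monotone (c.recvBy · u v) :=
  monotone_nat_of_le_succ fun t => by simp [recvBy_succ]

theorem recvBy_le_topplesBy (t : ℕ) (u v : V) : c.recvBy t u v ≤ c.topplesBy t u := by
  induction t with
  | zero => exact le_rfl
  | succ t ih =>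
    rw [recvBy_succ, topplesBy_succ]
    gcongr
    split
    · exact (arrivals_le _ _ _ _ _).trans (by omega)
    · exact Nat.zero_le _

theorem held_add_degree_mul_topplesBy (t : ℕ) (v : V) :
    (c.state t).held v + c.G.degree v * c.topplesBy t v =
      c.init v + (if v = c.root then 1 else 0) +
        ∑ u ∈ c.G.neighborFinset v, c.recvBy t u v := by
  induction t generalizing v with
  | zero => simp [state, topplesBy, recvBy]
  | succ t ih =>
    have hrecv : ∑ u ∈ c.G.neighborFinset v, c.recvBy (t + 1) u v =
        ∑ u ∈ c.G.neighborFinset v, c.recvBy t u v + ∑ u ∈ c.G.neighborFinset v,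
          arrivals c.diss u v (c.topplesBy t u) (c.topplesBy t u + c.tops (c.state t) u) := by
      rw [← Finset.sum_add_distrib]
      refine Finset.sum_congr rfl fun u hu => ?_
      rw [recvBy_succ, if_pos ((c.G.mem_neighborFinset v u).mp hu).symm]
    have hheld : (c.state (t + 1)).held v =
        ((c.state t).held v - c.G.degree v * c.tops (c.state t) v) +
        ∑ u ∈ c.G.neighborFinset v,
          arrivals c.diss u v (c.topplesBy t u) (c.topplesBy t u + c.tops (c.state t) u) := rfl
    rw [hrecv, hheld, topplesBy_succ, Nat.mul_add]
    have := c.degree_mul_tops_le (c.state t) v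
    have := ih v
    omega

theorem degree_mul_topplesBy_succ_le (s : ℕ) (x : V) :
    c.G.degree x * c.topplesBy (s + 1) x ≤
      c.init x + (if x = c.root then 1 else 0) +
        ∑ u ∈ c.G.neighborFinset x, c.recvBy s u x := by
  rw [← c.held_add_degree_mul_topplesBy, topplesBy_succ, Nat.mul_add]
  have := c.degree_mul_tops_le (c.state s) x
  omega

theorem reachable_of_topples (hinit : ∀ w, c.init w < c.G.degree w) (htree : c.FormsTree)
    {w : V} (hw : c.Topples w) : c.daggerGraph.Reachable c.root w := by
  refine htree.2 w ((em (w = c.root)).imp id fun hroot => ?_)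
  obtain ⟨t, ht⟩ := hw
  obtain ⟨s, rfl⟩ : ∃ s, t = s + 1 :=
    Nat.exists_eq_succ_of_ne_zero (by rintro rfl; simp [topplesBy_zero] at ht)
  have h := c.degree_mul_topplesBy_succ_le s w
  rw [if_neg hroot] at h
  have hpos : 0 < ∑ u ∈ c.G.neighborFinset w, c.recvBy s u w := by
    have := hinit w
    nlinarith
  obtain ⟨u, hu, hrecv⟩ := Finset.sum_pos_iff.1 hpos
  exact ⟨u, ((c.G.mem_neighborFinset w u).1 hu).symm, s,
    hrecv.trans_le (c.recvBy_le_topplesBy s u w)⟩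

theorem recvBy_le_topplesBy_of_not_isTreeParent (hinit : ∀ w, c.init w < c.G.degree w)
    (htree : c.FormsTree) {s : ℕ}
    (hchild : ∀ a b, c.daggerGraph.IsTreeParent c.root a b → c.topplesBy s b ≤ c.recvBy s a b)
    {w x : V} (hadj : c.G.Adj w x) (hwx : ¬ c.daggerGraph.IsTreeParent c.root w x) :
    c.recvBy s w x ≤ c.topplesBy s x := by
  rcases Nat.eq_zero_or_pos (c.topplesBy s w) with h0 | hpos
  · exact (c.recvBy_le_topplesBy s w x).trans (h0 ▸ Nat.zero_le _)
  have hxw := (isTreeParent_or_isTreeParent (H := c.daggerGraph) ⟨hadj, Or.inl ⟨s, hpos⟩⟩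
    (c.reachable_of_topples hinit htree ⟨s, hpos⟩)).resolve_left hwx
  calc c.recvBy s w x ≤ c.topplesBy s w := c.recvBy_le_topplesBy s w x
    _ ≤ c.recvBy s x w := hchild x w hxw
    _ ≤ c.topplesBy s x := c.recvBy_le_topplesBy s x w

theorem sum_recvBy_erase_parent_le (hinit : ∀ w, c.init w < c.G.degree w) (htree : c.FormsTree)
    {s : ℕ}
    (hchild : ∀ a b, c.daggerGraph.IsTreeParent c.root a b → c.topplesBy s b ≤ c.recvBy s a b)
    {a b : V} (hab : c.daggerGraph.IsTreeParent c.root a b) :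
    ∑ w ∈ (c.G.neighborFinset b).erase a, c.recvBy s w b ≤
      (c.G.degree b - 1) * c.topplesBy s b := by
  have hbound := Finset.sum_le_card_nsmul ((c.G.neighborFinset b).erase a)
    (c.recvBy s · b) (c.topplesBy s b) fun w hw => by
      obtain ⟨hwa, hw⟩ := Finset.mem_erase.1 hw
      exact c.recvBy_le_topplesBy_of_not_isTreeParent hinit htree hchild
        ((c.G.mem_neighborFinset _ _).1 hw).symm fun hwb => hwa (hwb.unique htree.1 hab)
  rwa [Finset.card_erase_of_mem ((c.G.mem_neighborFinset _ _).2 hab.1.1.symm),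
    card_neighborFinset_eq_degree, smul_eq_mul] at hbound

theorem ite_root_add_sum_recvBy_erase_child_le (hinit : ∀ w, c.init w < c.G.degree w)
    (htree : c.FormsTree) {s : ℕ}
    (hchild : ∀ a b, c.daggerGraph.IsTreeParent c.root a b → c.topplesBy s b ≤ c.recvBy s a b)
    (hparent : ∀ a b, c.daggerGraph.IsTreeParent c.root a b →
      c.topplesBy s a ≤ c.recvBy s b a + 1)
    {a b : V} (hab : c.daggerGraph.IsTreeParent c.root a b) :
    (if a = c.root then 1 else 0) + ∑ w ∈ (c.G.neighborFinset a).erase b, c.recvBy s w a ≤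
      (c.G.degree a - 1) * c.topplesBy s a + 1 := by
  have hcard : ((c.G.neighborFinset a).erase b).card = c.G.degree a - 1 := by
    rw [Finset.card_erase_of_mem ((c.G.mem_neighborFinset _ _).2 hab.1.1),
      card_neighborFinset_eq_degree]
  have hadj {w} (hw : w ∈ (c.G.neighborFinset a).erase b) : c.G.Adj w a :=
    ((c.G.mem_neighborFinset _ _).1 (Finset.mem_of_mem_erase hw)).symm
  by_cases hroot : a = c.root
  · have hbound := Finset.sum_le_card_nsmul ((c.G.neighborFinset a).erase b)
      (c.recvBy s · a) (c.topplesBy s a) fun w hw =>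
        c.recvBy_le_topplesBy_of_not_isTreeParent hinit htree hchild (hadj hw)
          fun hwa => hwa.ne_root hroot
    rw [hcard, smul_eq_mul] at hbound
    rw [if_pos hroot]
    omega
  obtain ⟨p, hpa⟩ := exists_isTreeParent hroot (hab.2.elim fun w _ => ⟨w⟩)
  have hp : p ∈ (c.G.neighborFinset a).erase b :=
    Finset.mem_erase.2 ⟨fun hpb => hab.not_symm htree.1 (hpb ▸ hpa),
      (c.G.mem_neighborFinset _ _).2 hpa.1.1.symm⟩
  have hbound : ∑ w ∈ (c.G.neighborFinset a).erase b, c.recvBy s w a ≤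
      ∑ w ∈ (c.G.neighborFinset a).erase b, (c.topplesBy s a + if w = p then 1 else 0) := by
    refine Finset.sum_le_sum fun w hw => ?_
    split_ifs with hwp
    · subst hwp
      have := c.recvBy_le_topplesBy s w a
      have := c.recvBy_le_topplesBy s a w
      have := hparent w a hpa
      omega
    · exact (c.recvBy_le_topplesBy_of_not_isTreeParent hinit htree hchild (hadj hw)
        fun hwa => hwp (hwa.unique htree.1 hpa)).trans le_self_add
  rw [Finset.sum_add_distrib, Finset.sum_const, Finset.sum_ite_eq' _ _ _, if_pos hp, hcard,
    smul_eq_mul] at hbound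
  rw [if_neg hroot]
  omega

theorem topplesBy_succ_le_recvBy_succ_add {x y : V} (hinit : c.init x < c.G.degree x)
    (hy : y ∈ c.G.neighborFinset x) {s e : ℕ} (hprev : c.topplesBy s x ≤ c.recvBy s y x + e)
    (hsum : (if x = c.root then 1 else 0) +
        ∑ w ∈ (c.G.neighborFinset x).erase y, c.recvBy s w x ≤
      (c.G.degree x - 1) * c.topplesBy s x + e) :
    c.topplesBy (s + 1) x ≤ c.recvBy (s + 1) y x + e := by
  have hrecv : c.recvBy s y x ≤ c.recvBy (s + 1) y x := c.recvBy_mono y x s.le_succ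
  have hmono : c.topplesBy s x ≤ c.topplesBy (s + 1) x := c.topplesBy_mono x s.le_succ
  rcases hmono.eq_or_lt with heq | hlt
  · rw [← heq]
    omega
  have h := c.degree_mul_topplesBy_succ_le s x
  rw [← Finset.add_sum_erase _ _ hy] at h
  have := Nat.le_add_of_mul_le_add_pred_mul hinit hlt (r := c.recvBy s y x) (e := e) (by omega)
  omega

theorem topplesBy_le_recvBy_of_isTreeParent (hinit : ∀ w, c.init w < c.G.degree w)
    (htree : c.FormsTree) (t : ℕ) {a b : V} (hab : c.daggerGraph.IsTreeParent c.root a b) :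
    c.topplesBy t b ≤ c.recvBy t a b ∧ c.topplesBy t a ≤ c.recvBy t b a + 1 := by
  induction t generalizing a b with
  | zero => simp [topplesBy_zero]
  | succ s ih =>
    have hchild a b (h : c.daggerGraph.IsTreeParent c.root a b) := (ih h).1
    have hparent a b (h : c.daggerGraph.IsTreeParent c.root a b) := (ih h).2
    constructor
    · exact c.topplesBy_succ_le_recvBy_succ_add (e := 0) (hinit b)
        ((c.G.mem_neighborFinset _ _).2 hab.1.1.symm) (ih hab).1
        (by rw [if_neg hab.ne_root, zero_add]
            exact c.sum_recvBy_erase_parent_le hinit htree hchild hab)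
    · exact c.topplesBy_succ_le_recvBy_succ_add (hinit a)
        ((c.G.mem_neighborFinset _ _).2 hab.1.1) (ih hab).2
        (c.ite_root_add_sum_recvBy_erase_child_le hinit htree hchild hparent hab)

/-- If `v` were the parent of `u` instead, the tree bounds would give
`topplesBy u ≤ topplesBy v ≤ topplesBy p` for the parent `p` of `v`, which has not toppled
yet. -/
theorem isTreeParent_of_isParent (hinit : ∀ w, c.init w < c.G.degree w) (htree : c.FormsTree)
    {u v : V} (hv : v ≠ c.root) (huv : c.IsParent u v) :
    c.daggerGraph.IsTreeParent c.root u v := by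
  obtain ⟨t, hpos, hothers⟩ := huv
  have hadj : c.G.Adj u v := by
    by_contra h
    simp [sentBy, h] at hpos
  rw [sentBy, if_pos hadj] at hpos
  refine (isTreeParent_or_isTreeParent (H := c.daggerGraph) ⟨hadj, Or.inl ⟨t, hpos⟩⟩
    (c.reachable_of_topples hinit htree ⟨t, hpos⟩)).resolve_right fun hvu => ?_
  obtain ⟨p, hpv⟩ := exists_isTreeParent hv (hvu.2.elim fun w _ => ⟨w⟩)
  have hp := hothers p fun hpu => hvu.not_symm htree.1 (hpu ▸ hpv)
  rw [sentBy, if_pos hpv.1.1] at hp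
  have := (c.topplesBy_le_recvBy_of_isTreeParent hinit htree t hvu).1
  have := (c.topplesBy_le_recvBy_of_isTreeParent hinit htree t hpv).1
  have := c.recvBy_le_topplesBy t v u
  have := c.recvBy_le_topplesBy t p v
  omega

end Cascade

end BTW

theorem stmt11_general {V : Type*} [Fintype V] [DecidableEq V] (c : BTW.Cascade V)
    (hinit : ∀ w, c.init w < c.G.degree w)
    (htree : c.FormsTree)
    (u v : V) (hv : v ≠ c.root) (hp : c.IsParent u v)
    (n t : ℕ) (htop : c.topplesBy t v = n)
    (n' m m' : ℕ)
    (hn' : n' = c.sentBy t u v) (hm : m = c.recvBy t u v) (hm' : m' = c.recvBy t v u) :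
    (m ≤ n' ∧ n ≤ m ∧ m' ≤ n ∧ n' ≤ m' + 1) ∧
    ((n' = n + 1 ∧ m = n ∧ m' = n) ∨
     (n' = n + 1 ∧ m = n + 1 ∧ m' = n) ∨
     (n' = n ∧ m = n ∧ m' + 1 = n) ∨
     (n' = n ∧ m = n ∧ m' = n)) := by
  have huv := c.isTreeParent_of_isParent hinit htree hv hp
  obtain ⟨hchild, hparent⟩ := c.topplesBy_le_recvBy_of_isTreeParent hinit htree t huv
  rw [BTW.Cascade.sentBy, if_pos huv.1.1] at hn'
  have := c.recvBy_le_topplesBy t u v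
  have := c.recvBy_le_topplesBy t v u
  omega

/-- In a cascade that forms a finite tree `G†`, consider a non-root node `v`
at capacity that topples `n ≥ 1` times, with signature `(n′, m′)` toward its parent `u`
(`u` sends `n′` grains toward `v` and receives `m′` grains from `v`), and let `m` be the
number of grains `v` actually receives from `u`. Then `n′ ≥ m ≥ n ≥ m′ ≥ n′ − 1`, and
exactly one of the four cases holds: (i) `n′ = n + 1`, `m = m′ = n`; (ii) `n′ = m = n + 1`,
`m′ = n`; (iii) `n′ = m = n`, `m′ = n − 1`; (iv) `n′ = m = m′ = n`. -/
theorem stmt11 {V : Type*} [Fintype V] [DecidableEq V] (c : BTW.Cascade V)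
    (hsink : ∀ w, c.sink w = false)
    (hinit : ∀ w, c.init w < c.G.degree w)
    (htree : c.FormsTree)
    (u v : V) (hv : v ≠ c.root) (hp : c.IsParent u v) (hcap : c.AtCap v)
    (n t : ℕ) (hn : 1 ≤ n) (htop : c.topplesBy t v = n)
    (n' m m' : ℕ)
    (hn' : n' = c.sentBy t u v) (hm : m = c.recvBy t u v) (hm' : m' = c.recvBy t v u) :
    (m ≤ n' ∧ n ≤ m ∧ m' ≤ n ∧ n' ≤ m' + 1) ∧
    ((n' = n + 1 ∧ m = n ∧ m' = n) ∨
     (n' = n + 1 ∧ m = n + 1 ∧ m' = n) ∨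
     (n' = n ∧ m = n ∧ m' + 1 = n) ∨
     (n' = n ∧ m = n ∧ m' = n)) :=
  stmt11_general c hinit htree u v hv hp n t htop n' m m' hn' hm hm'
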